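/- Let t be a k-ary tree, L a 0-homogeneous tree language, b ∈ Σ₀, and α a symbol of arity ≥ 1 (or α ∈ Σ₀ with α ≠ b). Then α⁻¹(t ·_b L) = α⁻¹(t) ·_b L when α has arity ≥ 1, and α⁻¹(t ·_b L) = α⁻¹(t) ·_b L ∪ (b⁻¹(t) ·_b L) ∘₁ α⁻¹(L) when α ∈ Σ₀ ∖ {b}. -/

import Mathlib

inductive GTree (S : Type) (ar : S → ℕ) : Type where
  | eps (x : ℕ) : GTree S ar
  | node (f : S) (ts : Fin (ar f) → GTree S ar) : GTree S ar

namespace GTree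

variable {S : Type} {ar : S → ℕ}

/-- Substitute each ε-symbol `ε_x` by `σ x`. -/
def subst (σ : ℕ → GTree S ar) : GTree S ar → GTree S ar
  | eps x => σ x
  | node f ts => node f (fun i => subst σ (ts i))

/-- The multiset of ε-indices of a tree. -/
def epsIdx : GTree S ar → Multiset ℕ
  | eps x => {x}
  | node _ ts => ∑ i, epsIdx (ts i)

/-- `Inc_ε(z,t)`: increment every ε-index by `z`. -/
def inc (z : ℕ) (t : GTree S ar) : GTree S ar :=
  subst (fun x => eps (x + z)) t

/-- Composition `t ∘ (t₁,…,t_k)`: graft `ts_j` at the `j`-th smallest ε-index of `t`. -/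
def compo (t : GTree S ar) (ts : List (GTree S ar)) : GTree S ar :=
  subst (fun x => ts.getD ((Multiset.sort (epsIdx t) (· ≤ ·)).idxOf x) (eps x)) t

/-- The tree `α(ε₁,…,ε_k)` associated with a symbol `α`. -/
def symTree (f : S) : GTree S ar := node f (fun i => eps (i.1 + 1))

/-- Bottom-up quotient `d⁻¹(t)` of a tree `t` w.r.t. a tree `d`. -/
def quotT (d t : GTree S ar) : Set (GTree S ar) :=
  { u | epsIdx u = 1 ::ₘ (epsIdx t - epsIdx d).map (· + 1) ∧
        subst (fun j => if j = 1 then d else eps (j - 1)) u = t }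

/-- Bottom-up quotient `d⁻¹(L)` of a language w.r.t. a tree. -/
def quotL (d : GTree S ar) (L : Set (GTree S ar)) : Set (GTree S ar) :=
  ⋃ t ∈ L, quotT d t

def incL (z : ℕ) (L : Set (GTree S ar)) : Set (GTree S ar) := inc z '' L

/-- Composition of languages `L ∘ (L₁,…,L_k)`. -/
def compoL (L : Set (GTree S ar)) (Ls : List (Set (GTree S ar))) : Set (GTree S ar) :=
  { u | ∃ t ∈ L, ∃ ts : List (GTree S ar), List.Forall₂ (· ∈ ·) ts Ls ∧ u = compo t ts }

/-- Partial composition `t ∘₁ L'` at the first (smallest) ε-index. -/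
def pcomp (t : GTree S ar) (L' : Set (GTree S ar)) : Set (GTree S ar) :=
  { u | ∃ t' ∈ L', u = compo t (t' :: ((Multiset.sort (epsIdx t) (· ≤ ·)).tail).map eps) }

/-- Partial composition of languages `L ∘₁ L'`. -/
def pcompL (L L' : Set (GTree S ar)) : Set (GTree S ar) := ⋃ t ∈ L, pcomp t L'

/-- Tree substitution `t_{b ← L}` of the 0-ary symbol `b` by the language `L`. -/
def bsub [DecidableEq S] (b : S) (L : Set (GTree S ar)) : GTree S ar → Set (GTree S ar)
  | eps x => {eps x}
  | node f ts =>
      if f = b then L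
      else { u | ∃ us : Fin (ar f) → GTree S ar, (∀ i, us i ∈ bsub b L (ts i)) ∧ u = node f us }

/-- `b`-product `L₁ ·_b L₂`. -/
def prodB [DecidableEq S] (L₁ : Set (GTree S ar)) (b : S) (L₂ : Set (GTree S ar)) :
    Set (GTree S ar) :=
  ⋃ t ∈ L₁, bsub b L₂ t

/-- Iterated `b`-product `L^{n_b}`. -/
def iterB [DecidableEq S] (b : S) (L : Set (GTree S ar)) : ℕ → Set (GTree S ar)
  | 0 => {symTree b}
  | n + 1 => iterB b L n ∪ prodB L b (iterB b L n)

/-- `b`-closure `L^{*_b}`. -/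
def closB [DecidableEq S] (b : S) (L : Set (GTree S ar)) : Set (GTree S ar) :=
  ⋃ n, iterB b L n

/-- Iterated composition `L^{n∘}` of a 1-homogeneous language of ε-index `{x}`. -/
def iterC (x : ℕ) (L : Set (GTree S ar)) : ℕ → Set (GTree S ar)
  | 0 => {eps x}
  | n + 1 => iterC x L n ∪ pcompL (iterC x L n) L

/-- Composition closure `L^⊛`. -/
def closC (x : ℕ) (L : Set (GTree S ar)) : Set (GTree S ar) := ⋃ n, iterC x L n

end GTree

/-!
An element `u` of a quotient `α⁻¹(s)` is a tree with a single hole `ε₁` (and no `ε₀`) such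
that plugging `α(ε₁, …)` into the hole, and shifting the other ε-indices down, gives `s`
(`mem_quotT_iff`). If `s ∈ t ·_b L`, the hole of `u` either lies outside the copies of trees of
`L` substituted for the occurrences of `b`, and then undoing these substitutions yields an
element of `α⁻¹(t)`, or it lies inside the copy of some `l ∈ L` substituted for one occurrence
of `b`; then `u` is an element of `α⁻¹(l)` grafted at `ε₁` into a tree of `b⁻¹(t) ·_b L`.
When `α` has positive arity the second case cannot occur, because `α⁻¹(L)` is empty for a
0-homogeneous `L`.
-/

lemma Multiset.bind_eq_map_filter_add_nsmul {α β : Type*} [DecidableEq α]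
    (m : Multiset α) (a : α) (g : α → Multiset β) (f : α → β)
    (h : ∀ x ≠ a, g x = {f x}) :
    m.bind g = (m.filter (· ≠ a)).map f + m.count a • g a := by
  induction m using Multiset.induction with
  | empty => simp
  | cons x m ih =>
    by_cases hx : x = a
    · subst hx
      simp [ih, succ_nsmul, add_comm, add_assoc]
    · simp [ih, hx, h x hx, Multiset.count_cons_of_ne (Ne.symm hx)]

lemma Multiset.exists_count_eq_one_of_count_sum_eq_one {ι α : Type*} [Fintype ι]
    [DecidableEq ι] [DecidableEq α] {m : ι → Multiset α} {a : α}
    (h : (∑ i, m i).count a = 1) :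
    ∃ j, (m j).count a = 1 ∧ ∀ i ≠ j, a ∉ m i := by
  rw [Multiset.count_sum'] at h
  obtain ⟨j, -, hj⟩ := Finset.exists_ne_zero_of_sum_ne_zero (h ▸ one_ne_zero)
  rw [← Finset.add_sum_erase _ _ (Finset.mem_univ j)] at h
  have hrest :=
    Finset.sum_eq_zero_iff.1 (by omega : ∑ i ∈ Finset.univ.erase j, (m i).count a = 0)
  exact ⟨j, by omega, fun i hi => Multiset.count_eq_zero.1 (hrest i (by simp [hi]))⟩

namespace GTree

variable {S : Type} {ar : S → ℕ}

@[simp] lemma epsIdx_eps (x : ℕ) : epsIdx (eps x : GTree S ar) = {x} := rfl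

lemma epsIdx_node (f : S) (ts : Fin (ar f) → GTree S ar) :
    epsIdx (node f ts) = ∑ i, epsIdx (ts i) := rfl

@[simp] lemma subst_eps (σ : ℕ → GTree S ar) (x : ℕ) : subst σ (eps x) = σ x := rfl

lemma subst_node (σ : ℕ → GTree S ar) (f : S) (ts : Fin (ar f) → GTree S ar) :
    subst σ (node f ts) = node f (fun i => subst σ (ts i)) := rfl

lemma epsIdx_node_of_ar_eq_zero {f : S} (h : ar f = 0) (ts : Fin (ar f) → GTree S ar) :
    epsIdx (node f ts) = 0 := by
  have : IsEmpty (Fin (ar f)) := by rw [h]; infer_instance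
  simp [epsIdx_node]

lemma node_eq_symTree_of_ar_eq_zero {f : S} (h : ar f = 0) (ts : Fin (ar f) → GTree S ar) :
    node f ts = symTree f :=
  congrArg (node f) (funext fun i => absurd i.2 (by omega))

lemma mem_epsIdx_node {f : S} {ts : Fin (ar f) → GTree S ar} {x : ℕ} :
    x ∈ epsIdx (node f ts) ↔ ∃ i, x ∈ epsIdx (ts i) := by
  simp [epsIdx_node, Multiset.mem_sum]

lemma epsIdx_subst (σ : ℕ → GTree S ar) (t : GTree S ar) :
    epsIdx (subst σ t) = (epsIdx t).bind fun x => epsIdx (σ x) := by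
  induction t with
  | eps x => simp
  | node f ts ih =>
    let bindHom : Multiset ℕ →+ Multiset ℕ :=
      ⟨⟨fun s => s.bind fun x => epsIdx (σ x), Multiset.zero_bind _⟩,
        fun _ _ => Multiset.add_bind _ _ _⟩
    simp only [subst_node, epsIdx_node, ih]
    exact (map_sum bindHom _ _).symm

lemma subst_congr {σ σ' : ℕ → GTree S ar} {t : GTree S ar}
    (h : ∀ x ∈ epsIdx t, σ x = σ' x) : subst σ t = subst σ' t := by
  induction t with
  | eps x => exact h x (by simp)
  | node f ts ih =>
    simp only [subst_node]
    congr 1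
    funext i
    exact ih i fun x hx => h x (mem_epsIdx_node.2 ⟨i, hx⟩)

lemma subst_eq_self {σ : ℕ → GTree S ar} {t : GTree S ar}
    (h : ∀ x ∈ epsIdx t, σ x = eps x) : subst σ t = t := by
  induction t with
  | eps x => exact h x (by simp)
  | node f ts ih =>
    simp only [subst_node]
    congr 1
    funext i
    exact ih i fun x hx => h x (mem_epsIdx_node.2 ⟨i, hx⟩)

lemma subst_subst (σ σ' : ℕ → GTree S ar) (t : GTree S ar) :
    subst σ (subst σ' t) = subst (fun x => subst σ (σ' x)) t := by
  induction t with
  | eps x => rfl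
  | node f ts ih => simp only [subst_node, ih]

def quotSubst (d : GTree S ar) : ℕ → GTree S ar := fun j => if j = 1 then d else eps (j - 1)

def graftSubst (t' : GTree S ar) : ℕ → GTree S ar := fun j => if j = 1 then t' else eps j

lemma epsIdx_subst_quotSubst (d u : GTree S ar) :
    epsIdx (subst (quotSubst d) u) =
      ((epsIdx u).filter (· ≠ 1)).map (· - 1) + (epsIdx u).count 1 • epsIdx d := by
  rw [epsIdx_subst, Multiset.bind_eq_map_filter_add_nsmul _ 1 _ (· - 1)] <;>
    simp +contextual [quotSubst]

lemma epsIdx_subst_graftSubst (t' w : GTree S ar) :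
    epsIdx (subst (graftSubst t') w) =
      (epsIdx w).filter (· ≠ 1) + (epsIdx w).count 1 • epsIdx t' := by
  rw [epsIdx_subst, Multiset.bind_eq_map_filter_add_nsmul _ 1 _ id] <;>
    simp +contextual [graftSubst]

lemma subst_quotSubst_eq_of_one_notMem {u : GTree S ar} (hu : 1 ∉ epsIdx u) (d d' : GTree S ar) :
    subst (quotSubst d) u = subst (quotSubst d') u :=
  subst_congr fun x hx => by simp [quotSubst, show x ≠ 1 by rintro rfl; exact hu hx]

lemma subst_graftSubst_eq_self {u : GTree S ar} (hu : 1 ∉ epsIdx u) (t' : GTree S ar) :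
    subst (graftSubst t') u = u :=
  subst_eq_self fun x hx => by simp [graftSubst, show x ≠ 1 by rintro rfl; exact hu hx]

lemma subst_quotSubst_subst_graftSubst (d t' w : GTree S ar) :
    subst (quotSubst d) (subst (graftSubst t') w) =
      subst (quotSubst (subst (quotSubst d) t')) w := by
  rw [subst_subst]
  congr 1
  funext x
  by_cases hx : x = 1 <;> simp [graftSubst, quotSubst, hx]

def OneHole (u : GTree S ar) : Prop := 0 ∉ epsIdx u ∧ (epsIdx u).count 1 = 1

lemma OneHole.cons_filter {u : GTree S ar} (hu : OneHole u) :
    1 ::ₘ (epsIdx u).filter (· ≠ 1) = epsIdx u := by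
  ext x
  by_cases hx : x = 1
  · simp [hx, hu.2]
  · simp [Multiset.count_cons_of_ne hx, hx]

lemma oneHole_subst_graftSubst_iff {t' w : GTree S ar} :
    OneHole (subst (graftSubst t') w) ↔ OneHole w ∧ OneHole t' := by
  simp only [OneHole, epsIdx_subst_graftSubst, ← Multiset.count_eq_zero, Multiset.count_add,
    Multiset.count_nsmul, Multiset.count_filter, if_pos zero_ne_one, if_neg (not_not.2 rfl),
    zero_add, mul_eq_one]
  grind

lemma zero_notMem_epsIdx_symTree (α : S) : 0 ∉ epsIdx (symTree (ar := ar) α) := by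
  simp [symTree, mem_epsIdx_node]

lemma mem_quotT_iff {d t u : GTree S ar} (hd : 0 ∉ epsIdx d) :
    u ∈ quotT d t ↔ OneHole u ∧ subst (quotSubst d) u = t := by
  have hsubst := epsIdx_subst_quotSubst d u
  constructor
  · rintro ⟨hidx, ht⟩
    replace ht : subst (quotSubst d) u = t := ht
    subst ht
    have hu0 : 0 ∉ epsIdx u := by simp [hidx]
    have ht0 : 0 ∉ epsIdx (subst (quotSubst d) u) := by
      simp only [hsubst, Multiset.mem_add, Multiset.mem_map, Multiset.mem_filter,
        Multiset.mem_nsmul, not_or, not_exists, not_and]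
      exact ⟨fun x ⟨hx, hx1⟩ hx0 => hu0 (by rwa [show x = 0 by omega] at hx), fun _ => hd⟩
    refine ⟨⟨hu0, ?_⟩, rfl⟩
    rw [hidx, Multiset.count_cons_self, Multiset.count_map_eq_count' _ _ (add_left_injective 1) 0,
      Multiset.count_sub, Multiset.count_eq_zero.2 ht0, Nat.zero_sub]
  · rintro ⟨hu, rfl⟩
    refine ⟨?_, rfl⟩
    have hne : ∀ x ∈ (epsIdx u).filter (· ≠ 1), x - 1 + 1 = x := fun x hx => by
      have : x ≠ 0 := fun h => hu.1 (h ▸ (Multiset.mem_filter.1 hx).1)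
      omega
    rw [hsubst, hu.2, one_nsmul, add_tsub_cancel_right, Multiset.map_map, Function.comp_def,
      Multiset.map_congr rfl hne, Multiset.map_id', hu.cons_filter]

lemma mem_quotL_symTree_iff {α : S} {L : Set (GTree S ar)} {u : GTree S ar} :
    u ∈ quotL (symTree α) L ↔ OneHole u ∧ subst (quotSubst (symTree α)) u ∈ L := by
  simp [quotL, mem_quotT_iff (zero_notMem_epsIdx_symTree α)]

lemma quotL_symTree_eq_empty {α : S} (hα : 1 ≤ ar α) {L : Set (GTree S ar)}
    (hL : ∀ u ∈ L, epsIdx u = 0) : quotL (symTree α) L = ∅ := by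
  refine Set.eq_empty_of_forall_notMem fun u hu => ?_
  obtain ⟨hu, hl⟩ := mem_quotL_symTree_iff.1 hu
  have h := hL _ hl
  rw [epsIdx_subst_quotSubst, hu.2, one_nsmul] at h
  have h1 : 1 ∈ epsIdx (symTree (ar := ar) α) := mem_epsIdx_node.2 ⟨⟨0, hα⟩, by simp⟩
  simp [(add_eq_zero.1 h).2] at h1

lemma compo_cons_tail_eq_subst_graftSubst {w : GTree S ar} (hw : OneHole w) (t' : GTree S ar) :
    compo w (t' :: ((Multiset.sort (epsIdx w) (· ≤ ·)).tail).map eps) =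
      subst (graftSubst t') w := by
  set l := Multiset.sort ((epsIdx w).filter (· ≠ 1)) (· ≤ ·)
  have hsort : Multiset.sort (epsIdx w) (· ≤ ·) = 1 :: l := by
    conv_lhs => rw [← hw.cons_filter]
    refine Multiset.sort_cons _ _ _ fun x hx => Nat.one_le_iff_ne_zero.2 ?_
    rintro rfl
    exact hw.1 (Multiset.mem_filter.1 hx).1
  unfold compo
  rw [hsort, List.tail_cons]
  refine subst_congr fun x hx => ?_
  by_cases hx1 : x = 1
  · simp [hx1, graftSubst]
  · have hxl : x ∈ l := by rw [Multiset.mem_sort, Multiset.mem_filter]; exact ⟨hx, hx1⟩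
    have hidx := List.idxOf_lt_length_iff.2 hxl
    rw [List.idxOf_cons_ne _ (Ne.symm hx1), List.getD_cons_succ, List.getD_map,
      List.getD_eq_getElem _ _ hidx, List.getElem_idxOf hidx]
    simp [graftSubst, hx1]

lemma mem_pcompL {L₁ L₂ : Set (GTree S ar)} {u : GTree S ar} :
    u ∈ pcompL L₁ L₂ ↔
      ∃ w ∈ L₁, ∃ t' ∈ L₂,
        u = compo w (t' :: ((Multiset.sort (epsIdx w) (· ≤ ·)).tail).map eps) := by
  simp [pcompL, pcomp]

lemma pcompL_empty (L : Set (GTree S ar)) : pcompL L ∅ = ∅ := by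
  simp [pcompL, pcomp]

section Bsub

variable [DecidableEq S] {b : S} {L : Set (GTree S ar)}

@[simp] lemma bsub_eps (x : ℕ) : bsub b L (eps x) = {eps x} := rfl

lemma bsub_node_of_eq {f : S} (hf : f = b) (ts : Fin (ar f) → GTree S ar) :
    bsub b L (node f ts) = L := by
  simp [bsub, hf]

lemma mem_bsub_node_of_ne {f : S} (hf : f ≠ b) {ts : Fin (ar f) → GTree S ar} {s : GTree S ar} :
    s ∈ bsub b L (node f ts) ↔ ∃ us, (∀ i, us i ∈ bsub b L (ts i)) ∧ s = node f us := by
  simp [bsub, hf]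

lemma mem_prodB {L₁ L₂ : Set (GTree S ar)} {u : GTree S ar} :
    u ∈ prodB L₁ b L₂ ↔ ∃ t ∈ L₁, u ∈ bsub b L₂ t := by
  simp [prodB]

lemma epsIdx_eq_of_mem_bsub (hb : ar b = 0) (hL : ∀ u ∈ L, epsIdx u = 0) {t s : GTree S ar}
    (hs : s ∈ bsub b L t) : epsIdx s = epsIdx t := by
  induction t generalizing s with
  | eps x => simp_all
  | node f ts ih =>
    by_cases hf : f = b
    · rw [bsub_node_of_eq hf] at hs
      rw [hL s hs, epsIdx_node_of_ar_eq_zero (hf ▸ hb)]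
    · obtain ⟨us, hus, rfl⟩ := (mem_bsub_node_of_ne hf).1 hs
      simp only [epsIdx_node, fun i => ih i (hus i)]

lemma oneHole_iff_of_mem_bsub (hb : ar b = 0) (hL : ∀ u ∈ L, epsIdx u = 0) {t s : GTree S ar}
    (hs : s ∈ bsub b L t) : OneHole s ↔ OneHole t := by
  rw [OneHole, OneHole, epsIdx_eq_of_mem_bsub hb hL hs]

lemma eq_symTree_of_symTree_mem_bsub (hL : ∀ u ∈ L, epsIdx u = 0) {α f : S} (hf : f ≠ b)
    {ts : Fin (ar f) → GTree S ar} (h : symTree α ∈ bsub b L (node f ts)) :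
    node f ts = symTree α := by
  obtain ⟨us, hus, ⟨⟩⟩ := (mem_bsub_node_of_ne hf).1 h
  refine congrArg (node α) (funext fun i => ?_)
  have hi := hus i
  cases hti : ts i with
  | eps x => simp_all
  | node g gs =>
    by_cases hg : g = b
    · rw [hti, bsub_node_of_eq hg] at hi
      simpa using hL _ hi
    · rw [hti, mem_bsub_node_of_ne hg] at hi
      obtain ⟨_, _, ⟨⟩⟩ := hi

lemma symTree_mem_bsub_symTree {α : S} (hαb : α ≠ b) : symTree α ∈ bsub b L (symTree α) :=
  (mem_bsub_node_of_ne hαb).2 ⟨_, fun _ => rfl, rfl⟩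

lemma subst_mem_bsub (hL : ∀ u ∈ L, epsIdx u = 0) {σ σ' : ℕ → GTree S ar}
    (hσ : ∀ x, σ' x ∈ bsub b L (σ x)) {v w : GTree S ar} (hw : w ∈ bsub b L v) :
    subst σ' w ∈ bsub b L (subst σ v) := by
  induction v generalizing w with
  | eps x => simp_all
  | node f ts ih =>
    by_cases hf : f = b
    · rw [bsub_node_of_eq hf] at hw
      rwa [subst_node, bsub_node_of_eq hf, subst_eq_self (t := w) (by simp [hL w hw])]
    · obtain ⟨us, hus, rfl⟩ := (mem_bsub_node_of_ne hf).1 hw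
      rw [subst_node, subst_node, mem_bsub_node_of_ne hf]
      exact ⟨_, fun i => ih i (hus i), rfl⟩

lemma quotSubst_mem_bsub {d d' : GTree S ar} (hd : d' ∈ bsub b L d) (x : ℕ) :
    quotSubst d' x ∈ bsub b L (quotSubst d x) := by
  by_cases hx : x = 1 <;> simp [quotSubst, hx, hd]

lemma exists_bsub_of_subst_quotSubst_mem_bsub (hb : ar b = 0) (hL : ∀ u ∈ L, epsIdx u = 0)
    (d : GTree S ar) {t u : GTree S ar} (hu : 1 ∉ epsIdx u)
    (h : subst (quotSubst d) u ∈ bsub b L t) :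
    ∃ v, subst (quotSubst d) v = t ∧ u ∈ bsub b L v := by
  induction t generalizing u with
  | eps x =>
    cases u with
    | eps y => exact ⟨eps y, h, rfl⟩
    | node g us => simp [subst_node] at h
  | node f ts ih =>
    by_cases hf : f = b
    · rw [bsub_node_of_eq hf] at h
      have hu0 : epsIdx u = 0 := by
        refine Multiset.eq_zero_of_forall_notMem fun x hx => ?_
        have hx1 : x ≠ 1 := by rintro rfl; exact hu hx
        have : x - 1 ∈ epsIdx (subst (quotSubst d) u) := by
          rw [epsIdx_subst]
          exact Multiset.mem_bind.2 ⟨x, hx, by simp [quotSubst, hx1]⟩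
        simp [hL _ h] at this
      refine ⟨node f ts, subst_eq_self (by simp [epsIdx_node_of_ar_eq_zero (hf ▸ hb)]), ?_⟩
      rwa [bsub_node_of_eq hf, ← subst_eq_self (t := u) (by simp [hu0])]
    · obtain ⟨ss, hss, hs⟩ := (mem_bsub_node_of_ne hf).1 h
      cases u with
      | eps y => simp [quotSubst, show y ≠ 1 by rintro rfl; simp at hu] at hs
      | node g us =>
        obtain ⟨⟩ := hs
        have hus : ∀ i, 1 ∉ epsIdx (us i) := fun i hi => hu (mem_epsIdx_node.2 ⟨i, hi⟩)
        choose v hv using fun i => ih i (hus i) (hss i)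
        exact ⟨node f v, by simp [subst_node, hv],
          (mem_bsub_node_of_ne hf).2 ⟨us, fun i => (hv i).2, rfl⟩⟩

lemma subst_quotSubst_mem_bsub_cases (hb : ar b = 0) (hL : ∀ u ∈ L, epsIdx u = 0) {α : S}
    {t u : GTree S ar} (hu : (epsIdx u).count 1 = 1)
    (h : subst (quotSubst (symTree α)) u ∈ bsub b L t) :
    (∃ v, subst (quotSubst (symTree α)) v = t ∧ u ∈ bsub b L v) ∨
      ∃ v w u', subst (quotSubst (symTree b)) v = t ∧ w ∈ bsub b L v ∧
        subst (quotSubst (symTree α)) u' ∈ L ∧ u = subst (graftSubst u') w := by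
  induction t generalizing u with
  | eps x =>
    cases u with
    | eps y => exact Or.inl ⟨eps y, h, rfl⟩
    | node g us => simp [subst_node] at h
  | node f ts ih =>
    by_cases hf : f = b
    · rw [bsub_node_of_eq hf] at h
      refine Or.inr ⟨eps 1, eps 1, u, ?_, rfl, h, rfl⟩
      subst hf
      exact (node_eq_symTree_of_ar_eq_zero hb ts).symm
    · obtain ⟨ss, hss, hs⟩ := (mem_bsub_node_of_ne hf).1 h
      cases u with
      | eps y =>
        obtain rfl : y = 1 := by simpa [Multiset.count_singleton, eq_comm] using hu
        exact Or.inl ⟨eps 1, (eq_symTree_of_symTree_mem_bsub hL hf h).symm, rfl⟩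
      | node g us =>
        obtain ⟨⟩ := hs
        rw [epsIdx_node] at hu
        obtain ⟨j, hj, hne⟩ := Multiset.exists_count_eq_one_of_count_sum_eq_one hu
        have hA (i) (hi : i ≠ j) :
            ∃ v, subst (quotSubst (symTree α)) v = ts i ∧ us i ∈ bsub b L v :=
          exists_bsub_of_subst_quotSubst_mem_bsub hb hL _ (hne i hi) (hss i)
        rcases ih j hj (hss j) with hvj | ⟨vj, wj, u', hvj, hwj, hu', hujw⟩
        · have hv (i) :
              ∃ v, subst (quotSubst (symTree α)) v = ts i ∧ us i ∈ bsub b L v := by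
            by_cases hi : i = j
            · subst hi; exact hvj
            · exact hA i hi
          choose v hv using hv
          exact Or.inl ⟨node f v, by simp [subst_node, hv],
            (mem_bsub_node_of_ne hf).2 ⟨us, fun i => (hv i).2, rfl⟩⟩
        · have hvw (i) : ∃ v w, subst (quotSubst (symTree b)) v = ts i ∧ w ∈ bsub b L v ∧
              us i = subst (graftSubst u') w := by
            by_cases hi : i = j
            · subst hi; exact ⟨vj, wj, hvj, hwj, hujw⟩
            obtain ⟨v, hv, huv⟩ := hA i hi
            have h1v : 1 ∉ epsIdx v := epsIdx_eq_of_mem_bsub hb hL huv ▸ hne i hi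
            refine ⟨v, us i, ?_, huv, (subst_graftSubst_eq_self (hne i hi) u').symm⟩
            rw [subst_quotSubst_eq_of_one_notMem h1v _ (symTree α), hv]
          choose v w hvw using hvw
          refine Or.inr ⟨node f v, node f w, u', by simp [subst_node, hvw],
            (mem_bsub_node_of_ne hf).2 ⟨w, fun i => (hvw i).2.1, rfl⟩, hu', ?_⟩
          simp only [subst_node, ← (hvw _).2.2]

lemma quotL_symTree_bsub (hb : ar b = 0) (hL : ∀ u ∈ L, epsIdx u = 0) {α : S} (hαb : α ≠ b)
    (t : GTree S ar) :
    quotL (symTree α) (bsub b L t) =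
      prodB (quotT (symTree α) t) b L ∪
        pcompL (prodB (quotT (symTree b) t) b L) (quotL (symTree α) L) := by
  have hα := zero_notMem_epsIdx_symTree (ar := ar) α
  have hb' := zero_notMem_epsIdx_symTree (ar := ar) b
  ext u
  rw [Set.mem_union, mem_quotL_symTree_iff, mem_prodB, mem_pcompL]
  constructor
  · rintro ⟨hu, hs⟩
    rcases subst_quotSubst_mem_bsub_cases hb hL hu.2 hs with
      ⟨v, hv, huv⟩ | ⟨v, w, u', hv, hwv, hlu', rfl⟩
    · refine Or.inl ⟨v, (mem_quotT_iff hα).2 ⟨?_, hv⟩, huv⟩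
      exact (oneHole_iff_of_mem_bsub hb hL huv).1 hu
    · obtain ⟨hw, hu'⟩ := oneHole_subst_graftSubst_iff.1 hu
      refine Or.inr ⟨w, mem_prodB.2 ⟨v, (mem_quotT_iff hb').2 ⟨?_, hv⟩, hwv⟩, u',
        mem_quotL_symTree_iff.2 ⟨hu', hlu'⟩,
        (compo_cons_tail_eq_subst_graftSubst hw u').symm⟩
      exact (oneHole_iff_of_mem_bsub hb hL hwv).1 hw
  · rintro (⟨v, hv, huv⟩ | ⟨w, hw, t', ht', rfl⟩)
    · obtain ⟨hv1, rfl⟩ := (mem_quotT_iff hα).1 hv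
      exact ⟨(oneHole_iff_of_mem_bsub hb hL huv).2 hv1,
        subst_mem_bsub hL (quotSubst_mem_bsub (symTree_mem_bsub_symTree hαb)) huv⟩
    · obtain ⟨v, hv, hwv⟩ := mem_prodB.1 hw
      obtain ⟨hv1, rfl⟩ := (mem_quotT_iff hb').1 hv
      obtain ⟨ht'1, hl⟩ := mem_quotL_symTree_iff.1 ht'
      have hw := (oneHole_iff_of_mem_bsub hb hL hwv).2 hv1
      rw [compo_cons_tail_eq_subst_graftSubst hw, oneHole_subst_graftSubst_iff,
        subst_quotSubst_subst_graftSubst]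
      refine ⟨⟨hw, ht'1⟩, subst_mem_bsub hL (quotSubst_mem_bsub ?_) hwv⟩
      rwa [symTree, bsub_node_of_eq rfl]

end Bsub

end GTree

open GTree in
/-- `α⁻¹(t ·_b L)` for `α` of arity ≥ 1, and for `α ∈ Σ₀ ∖ {b}`. -/
theorem quotient_alpha_of_bprod {S : Type} {ar : S → ℕ} [DecidableEq S] (α b : S)
    (hb : ar b = 0) (t : GTree S ar) (L : Set (GTree S ar))
    (hL : ∀ u ∈ L, epsIdx u = 0) :
    (1 ≤ ar α →
      quotL (symTree α) (bsub b L t) = prodB (quotT (symTree α) t) b L) ∧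
    (ar α = 0 → α ≠ b →
      quotL (symTree α) (bsub b L t) =
        prodB (quotT (symTree α) t) b L ∪
          pcompL (prodB (quotT (symTree b) t) b L) (quotL (symTree α) L)) := by
  refine ⟨fun hα => ?_, fun _ hαb => quotL_symTree_bsub hb hL hαb t⟩
  have hαb : α ≠ b := by rintro rfl; omega
  rw [quotL_symTree_bsub hb hL hαb, quotL_symTree_eq_empty hα hL, pcompL_empty, Set.union_empty]
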